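/- arXiv:1708.06861 — 2 statements merged into one kernel-verified Lean document; each statement's English description precedes it below -/
import Mathlib

section
/- Let x: M → ℝ^{n+1} be an immersed hypersurface with unit normal ν and mean curvature H, and a ∈ ℝ^{n+1} a constant vector. Define on M the tangential vector field Z_a = ⟨ν,a⟩x^T − ⟨x,ν⟩a^T (tangential part of ⟨ν,a⟩x − ⟨x,ν⟩a). Then div_M(Z_a) = n⟨ν,a⟩. -/
open Matrix

noncomputable section LocalHypersurface

/-- Partial derivative of a map defined on `ℝⁿ` (as `EuclideanSpace`), in the `i`-th
coordinate direction. -/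
def pder {n : ℕ} {F : Type*} [NormedAddCommGroup F] [NormedSpace ℝ F]
    (f : EuclideanSpace ℝ (Fin n) → F) (p : EuclideanSpace ℝ (Fin n)) (i : Fin n) : F :=
  fderiv ℝ f p (EuclideanSpace.single i 1)

variable {n m : ℕ}

/-- Induced (first fundamental form) metric `g_{ij} = ⟨∂_i x, ∂_j x⟩` of an immersion
`x : ℝⁿ ⊇ chart → ℝᵐ` in local coordinates. -/
def indMetric (x : EuclideanSpace ℝ (Fin n) → EuclideanSpace ℝ (Fin m))
    (p : EuclideanSpace ℝ (Fin n)) : Matrix (Fin n) (Fin n) ℝ :=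
  Matrix.of fun i j => (inner ℝ (pder x p i) (pder x p j) : ℝ)

/-- Second fundamental form `h_{ij} = ⟨∇̄_{∂_i} ν, ∂_j x⟩` in local coordinates, with
respect to the chosen unit normal `ν`. -/
def secondFF (x ν : EuclideanSpace ℝ (Fin n) → EuclideanSpace ℝ (Fin m))
    (p : EuclideanSpace ℝ (Fin n)) : Matrix (Fin n) (Fin n) ℝ :=
  Matrix.of fun i j => (inner ℝ (pder ν p i) (pder x p j) : ℝ)

/-- Mean curvature `H = tr_g h = tr(g⁻¹ h)`. -/
def meanCurv (x ν : EuclideanSpace ℝ (Fin n) → EuclideanSpace ℝ (Fin m))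
    (p : EuclideanSpace ℝ (Fin n)) : ℝ :=
  ((indMetric x p)⁻¹ * secondFF x ν p).trace

/-- Squared norm of the second fundamental form, `|h|² = tr(g⁻¹ h g⁻¹ h)`. -/
def sffNormSq (x ν : EuclideanSpace ℝ (Fin n) → EuclideanSpace ℝ (Fin m))
    (p : EuclideanSpace ℝ (Fin n)) : ℝ :=
  ((indMetric x p)⁻¹ * secondFF x ν p * (indMetric x p)⁻¹ * secondFF x ν p).trace

/-- The (intrinsic) gradient of a function `f` on the hypersurface, expressed as an ambient
vector: `∇f = g^{ij} ∂_j f ∂_i x`. -/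
def gradVec (x : EuclideanSpace ℝ (Fin n) → EuclideanSpace ℝ (Fin m))
    (f : EuclideanSpace ℝ (Fin n) → ℝ) (p : EuclideanSpace ℝ (Fin n)) :
    EuclideanSpace ℝ (Fin m) :=
  ∑ i, ∑ j, (((indMetric x p)⁻¹ i j) * pder f p j) • pder x p i

/-- The Laplace–Beltrami operator of the induced metric,
`Δf = (det g)^{-1/2} ∂_i (√(det g) g^{ij} ∂_j f)`. -/
def lapBel (x : EuclideanSpace ℝ (Fin n) → EuclideanSpace ℝ (Fin m))
    (f : EuclideanSpace ℝ (Fin n) → ℝ) (p : EuclideanSpace ℝ (Fin n)) : ℝ :=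
  (Real.sqrt (indMetric x p).det)⁻¹ *
    ∑ i, pder (fun q => Real.sqrt (indMetric x q).det *
      ∑ j, ((indMetric x q)⁻¹ i j) * pder f q j) p i

/-- The intrinsic divergence of a tangential vector field `W` (given in ambient coordinates)
along the hypersurface: `div_M W = g^{ij} ⟨∂_i W, ∂_j x⟩`. -/
def divSurf (x W : EuclideanSpace ℝ (Fin n) → EuclideanSpace ℝ (Fin m))
    (p : EuclideanSpace ℝ (Fin n)) : ℝ :=
  ∑ i, ∑ j, ((indMetric x p)⁻¹ i j) * (inner ℝ (pder W p i) (pder x p j) : ℝ)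

/-- The conformal Killing field `X_a x = ⟨x,a⟩ x - ½(|x|²+1) a` on `ℝ^{m}`. -/
def confKillX (a : EuclideanSpace ℝ (Fin m)) (y : EuclideanSpace ℝ (Fin m)) :
    EuclideanSpace ℝ (Fin m) :=
  (inner ℝ y a : ℝ) • y - ((‖y‖ ^ 2 + 1) / 2) • a

end LocalHypersurface

section AuxLemmas

variable {N : ℕ} {F : Type*} [NormedAddCommGroup F] [NormedSpace ℝ F]

lemma contDiff_pder' {f : EuclideanSpace ℝ (Fin N) → F} (hf : ContDiff ℝ (⊤ : ℕ∞) f) (k : Fin N) :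
    ContDiff ℝ (⊤ : ℕ∞) (fun q => pder f q k) :=
  (hf.fderiv_right (by simp)).clm_apply contDiff_const

lemma pder_comm' {f : EuclideanSpace ℝ (Fin N) → F} (hf : ContDiff ℝ (⊤ : ℕ∞) f)
    (p : EuclideanSpace ℝ (Fin N)) (i k : Fin N) :
    pder (fun q => pder f q k) p i = pder (fun q => pder f q i) p k := by
  have hd : DifferentiableAt ℝ (fun q => fderiv ℝ f q) p :=
    ((hf.fderiv_right (m := (⊤ : ℕ∞)) (by simp)).differentiable (by simp)) p
  have hsym : IsSymmSndFDerivAt ℝ f p :=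
    (hf.contDiffAt).isSymmSndFDerivAt (by
      simp only [minSmoothness_of_isRCLikeNormedField]; exact WithTop.coe_le_coe.mpr le_top)
  have expand : ∀ v w : Fin N,
      pder (fun q => pder f q w) p v
        = fderiv ℝ (fderiv ℝ f) p (EuclideanSpace.single v 1) (EuclideanSpace.single w 1) := by
    intro v w
    have h1 : fderiv ℝ (fun q => (fderiv ℝ f q) (EuclideanSpace.single w 1)) p
        = ((fderiv ℝ f p).comp
            (fderiv ℝ (fun _ => (EuclideanSpace.single w 1 : EuclideanSpace ℝ (Fin N))) p))
          + (fderiv ℝ (fderiv ℝ f) p).flip (EuclideanSpace.single w 1) :=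
      fderiv_clm_apply hd (differentiableAt_const _)
    simp only [pder]
    rw [h1]
    simp
  rw [expand, expand, hsym]

lemma complete_expand {N : ℕ} (e : Fin N → EuclideanSpace ℝ (Fin (N+1)))
    (ν : EuclideanSpace ℝ (Fin (N+1)))
    (g : Matrix (Fin N) (Fin N) ℝ)
    (hgdef : ∀ i j, g i j = (inner ℝ (e i) (e j) : ℝ))
    (hdet : g.det ≠ 0) (hn : ‖ν‖ = 1)
    (ho : ∀ i, (inner ℝ ν (e i) : ℝ) = 0)
    (u : EuclideanSpace ℝ (Fin (N+1))) :
    u = (∑ k, (∑ l, g⁻¹ k l * (inner ℝ (e l) u : ℝ)) • e k) + (inner ℝ ν u : ℝ) • ν := by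
  classical
  have hdetu : IsUnit g.det := isUnit_iff_ne_zero.mpr hdet
  have hνν : (inner ℝ ν ν : ℝ) = 1 := by
    rw [real_inner_self_eq_norm_sq, hn]; norm_num
  set b : Fin (N+1) → EuclideanSpace ℝ (Fin (N+1)) := Fin.snoc e ν with hb
  have hbc : ∀ k : Fin N, b k.castSucc = e k := fun k => Fin.snoc_castSucc _ _ _
  have hbl : b (Fin.last N) = ν := Fin.snoc_last _ _
  have li : LinearIndependent ℝ b := by
    rw [Fintype.linearIndependent_iff]
    intro c hc
    have hlast : c (Fin.last N) = 0 := by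
      have h0 : (inner ℝ ν (∑ i, c i • b i) : ℝ) = 0 := by rw [hc]; simp
      rw [inner_sum, Fin.sum_univ_castSucc] at h0
      simp only [inner_smul_right, hbc, hbl, ho, mul_zero, Finset.sum_const_zero, zero_add,
        hνν, mul_one] at h0
      exact h0
    have hmul : g.mulVec (fun k => c k.castSucc) = 0 := by
      funext i
      have h0 : (inner ℝ (e i) (∑ j, c j • b j) : ℝ) = 0 := by rw [hc]; simp
      rw [inner_sum, Fin.sum_univ_castSucc] at h0
      simp only [inner_smul_right, hbc, hbl] at h0
      have hoi : (inner ℝ (e i) ν : ℝ) = 0 := by rw [real_inner_comm]; exact ho i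
      rw [hoi, mul_zero, add_zero] at h0
      simp only [Matrix.mulVec, dotProduct, hgdef, Pi.zero_apply]
      rw [← h0]
      exact Finset.sum_congr rfl fun k _ => mul_comm _ _
    have hc' : (fun k : Fin N => c k.castSucc) = 0 := by
      have h2 := congrArg (fun v => g⁻¹.mulVec v) hmul
      simpa [Matrix.mulVec_mulVec, Matrix.nonsing_inv_mul g hdetu] using h2
    intro i
    refine Fin.lastCases hlast (fun k => ?_) i
    exact congrFun hc' k
  have hspan : Submodule.span ℝ (Set.range b) = ⊤ :=
    li.span_eq_top_of_card_eq_finrank (by simp)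
  set L : EuclideanSpace ℝ (Fin (N+1)) →L[ℝ] EuclideanSpace ℝ (Fin (N+1)) :=
    (∑ k, ∑ l, (g⁻¹ k l) • ((innerSL ℝ (e l)).smulRight (e k)))
      + (innerSL ℝ ν).smulRight ν with hL
  have hLapp : ∀ v, L v = (∑ k, (∑ l, g⁻¹ k l * (inner ℝ (e l) v : ℝ)) • e k)
      + (inner ℝ ν v : ℝ) • ν := by
    intro v
    simp only [hL, ContinuousLinearMap.add_apply, ContinuousLinearMap.sum_apply,
      ContinuousLinearMap.smul_apply, ContinuousLinearMap.smulRight_apply, innerSL_apply_apply,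
      smul_smul]
    congr 1
    refine Finset.sum_congr rfl fun k _ => ?_
    rw [Finset.sum_smul]
  have hid : L.toLinearMap = LinearMap.id := by
    apply LinearMap.ext_on hspan
    rintro v ⟨i, rfl⟩
    refine Fin.lastCases ?_ (fun k => ?_) i
    · rw [hbl]
      show L ν = ν
      have hel : ∀ l, (inner ℝ (e l) ν : ℝ) = 0 := fun l => by rw [real_inner_comm]; exact ho l
      rw [hLapp]
      simp only [hel, mul_zero, Finset.sum_const_zero, zero_smul, Finset.sum_const_zero,
        zero_add, hνν, one_smul]
    · rw [hbc]
      show L (e k) = e k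
      rw [hLapp]
      have hsum : ∀ k', (∑ l, g⁻¹ k' l * (inner ℝ (e l) (e k)) : ℝ) = (g⁻¹ * g) k' k := by
        intro k'
        rw [Matrix.mul_apply]
        exact Finset.sum_congr rfl fun l _ => by rw [hgdef]
      simp only [hsum, ho k, zero_smul, add_zero, Matrix.nonsing_inv_mul g hdetu]
      simp [Matrix.one_apply, ite_smul]
  have hLu : L u = u := by
    have := congrFun (congrArg DFunLike.coe hid) u
    simpa using this
  exact hLu.symm.trans (hLapp u)

end AuxLemmas

private lemma alg_main' {N : ℕ} (gi G H : Matrix (Fin N) (Fin N) ℝ) (ξ β : Fin N → ℝ) (c1 : ℝ)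
    (hHs : ∀ i k, H i k = H k i)
    (htr : ∑ i, ∑ j, gi i j * G i j = (N : ℝ)) :
    ∑ i, ∑ j, gi i j * ((∑ k, (∑ l, gi k l * β l) * H i k) * ξ j + c1 * G i j
      - (∑ k, (∑ l, gi k l * ξ l) * H i k) * β j) = (N : ℝ) * c1 := by
  classical
  have split : ∀ i, ∑ j, gi i j * ((∑ k, (∑ l, gi k l * β l) * H i k) * ξ j + c1 * G i j
        - (∑ k, (∑ l, gi k l * ξ l) * H i k) * β j)
      = (∑ k, (∑ l, gi k l * β l) * H i k) * (∑ j, gi i j * ξ j)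
        + c1 * (∑ j, gi i j * G i j)
        - (∑ k, (∑ l, gi k l * ξ l) * H i k) * (∑ j, gi i j * β j) := by
    intro i
    have expand : ∀ j, gi i j * ((∑ k, (∑ l, gi k l * β l) * H i k) * ξ j + c1 * G i j
          - (∑ k, (∑ l, gi k l * ξ l) * H i k) * β j)
        = (∑ k, (∑ l, gi k l * β l) * H i k) * (gi i j * ξ j)
          + c1 * (gi i j * G i j)
          - (∑ k, (∑ l, gi k l * ξ l) * H i k) * (gi i j * β j) := fun j => by ring
    simp only [expand]
    rw [Finset.sum_sub_distrib, Finset.sum_add_distrib, ← Finset.mul_sum, ← Finset.mul_sum,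
      ← Finset.mul_sum]
  simp only [split]
  rw [Finset.sum_sub_distrib, Finset.sum_add_distrib, ← Finset.mul_sum, htr]
  set u : Fin N → ℝ := fun i => ∑ j, gi i j * ξ j with hu
  set v : Fin N → ℝ := fun i => ∑ j, gi i j * β j with hv
  have hcancel : ∑ i, (∑ k, v k * H i k) * u i = ∑ i, (∑ k, u k * H i k) * v i := by
    have l1 : ∑ i, (∑ k, v k * H i k) * u i = ∑ i, ∑ k, v k * H i k * u i :=
      Finset.sum_congr rfl fun i _ => Finset.sum_mul _ _ _
    have l2 : ∑ i, (∑ k, u k * H i k) * v i = ∑ i, ∑ k, u k * H i k * v i :=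
      Finset.sum_congr rfl fun i _ => Finset.sum_mul _ _ _
    rw [l1, l2, Finset.sum_comm]
    refine Finset.sum_congr rfl fun i _ => Finset.sum_congr rfl fun k _ => ?_
    rw [hHs k i]; ring
  rw [hcancel]
  ring

/-- for an immersed hypersurface `x : M → ℝ^{n+1}` with unit normal `ν`,
the tangential field `Z_a = ⟨ν,a⟩ x^T − ⟨x,ν⟩ a^T` satisfies `div_M Z_a = n ⟨ν,a⟩`. -/
theorem divSurf_Za {n : ℕ}
    (x ν : EuclideanSpace ℝ (Fin n) → EuclideanSpace ℝ (Fin (n+1)))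
    (a : EuclideanSpace ℝ (Fin (n+1))) (p : EuclideanSpace ℝ (Fin n))
    (hx : ContDiff ℝ (⊤ : ℕ∞) x) (hν : ContDiff ℝ (⊤ : ℕ∞) ν)
    (hunit : ∀ q, ‖ν q‖ = 1)
    (horth : ∀ q i, (inner ℝ (ν q) (pder x q i) : ℝ) = 0)
    (himm : ∀ q, (indMetric x q).det ≠ 0) :
    divSurf x
      (fun q => (inner ℝ (ν q) a : ℝ) • (x q - (inner ℝ (x q) (ν q) : ℝ) • ν q)
        - (inner ℝ (x q) (ν q) : ℝ) • (a - (inner ℝ a (ν q) : ℝ) • ν q)) p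
      = (n : ℝ) * (inner ℝ (ν p) a : ℝ) := by
  classical
  have hxd : Differentiable ℝ x := hx.differentiable (by simp)
  have hνd : Differentiable ℝ ν := hν.differentiable (by simp)
  have hdetu : IsUnit (indMetric x p).det := isUnit_iff_ne_zero.mpr (himm p)
  have hgdef : ∀ i j, indMetric x p i j = (inner ℝ (pder x p i) (pder x p j) : ℝ) :=
    fun i j => rfl
  -- the derivative of the unit normal is orthogonal to the normal
  have hνν' : ∀ i, (inner ℝ (pder ν p i) (ν p) : ℝ) = 0 := by
    intro i
    have hfc : (fun q => (inner ℝ (ν q) (ν q) : ℝ)) = fun _ => (1 : ℝ) := by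
      funext q; rw [real_inner_self_eq_norm_sq, hunit q]; norm_num
    have h0 : fderiv ℝ (fun q => (inner ℝ (ν q) (ν q) : ℝ)) p (EuclideanSpace.single i 1)
        = 0 := by rw [hfc]; simp
    rw [fderiv_inner_apply ℝ (hνd p) (hνd p)] at h0
    have h1 : (inner ℝ (ν p) (fderiv ℝ ν p (EuclideanSpace.single i 1)) : ℝ)
        = (inner ℝ (fderiv ℝ ν p (EuclideanSpace.single i 1)) (ν p) : ℝ) := real_inner_comm _ _
    rw [h1] at h0
    have : (2 : ℝ) * (inner ℝ (fderiv ℝ ν p (EuclideanSpace.single i 1)) (ν p) : ℝ) = 0 := by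
      rw [two_mul]; exact h0
    have h2 : (inner ℝ (fderiv ℝ ν p (EuclideanSpace.single i 1)) (ν p) : ℝ) = 0 := by
      linarith
    exact h2
  -- symmetry of the second fundamental form
  have hsymm : ∀ i k, (inner ℝ (pder ν p i) (pder x p k) : ℝ)
      = (inner ℝ (pder ν p k) (pder x p i) : ℝ) := by
    have key : ∀ i k : Fin n, (inner ℝ (pder ν p i) (pder x p k) : ℝ)
        = - (inner ℝ (ν p) (pder (fun q => pder x q k) p i) : ℝ) := by
      intro i k
      have hfc : (fun q => (inner ℝ (ν q) (pder x q k) : ℝ)) = fun _ => (0 : ℝ) := by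
        funext q; exact horth q k
      have h0 : fderiv ℝ (fun q => (inner ℝ (ν q) (pder x q k) : ℝ)) p
          (EuclideanSpace.single i 1) = 0 := by rw [hfc]; simp
      rw [fderiv_inner_apply ℝ (hνd p) (((contDiff_pder' hx k).differentiable (by simp)) p)] at h0
      have h0' : (inner ℝ (ν p) (pder (fun q => pder x q k) p i) : ℝ)
          + (inner ℝ (pder ν p i) (pder x p k) : ℝ) = 0 := h0
      linarith
    intro i k
    rw [key i k, key k i, pder_comm' hx p i k]
  -- the vector field simplifies: normal parts cancel
  have hWeq : (fun q => (inner ℝ (ν q) a : ℝ) • (x q - (inner ℝ (x q) (ν q) : ℝ) • ν q)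
        - (inner ℝ (x q) (ν q) : ℝ) • (a - (inner ℝ a (ν q) : ℝ) • ν q))
      = fun q => (inner ℝ (ν q) a : ℝ) • x q - (inner ℝ (x q) (ν q) : ℝ) • a := by
    funext q
    have hc : (inner ℝ a (ν q) : ℝ) = (inner ℝ (ν q) a : ℝ) := real_inner_comm _ _
    rw [hc]
    module
  rw [hWeq]
  -- derivative of the simplified field
  have hdW : ∀ i, pder (fun q => (inner ℝ (ν q) a : ℝ) • x q
        - (inner ℝ (x q) (ν q) : ℝ) • a) p i
      = (inner ℝ (pder ν p i) a : ℝ) • x p + (inner ℝ (ν p) a : ℝ) • pder x p i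
        - (inner ℝ (pder ν p i) (x p) : ℝ) • a := by
    intro i
    have h1 : DifferentiableAt ℝ (fun q => (inner ℝ (ν q) a : ℝ)) p :=
      (hνd p).inner ℝ (differentiableAt_const _)
    have h2 : DifferentiableAt ℝ (fun q => (inner ℝ (x q) (ν q) : ℝ)) p :=
      (hxd p).inner ℝ (hνd p)
    have e1 : fderiv ℝ (fun q => (inner ℝ (ν q) a : ℝ)) p (EuclideanSpace.single i 1)
        = (inner ℝ (pder ν p i) a : ℝ) := by
      rw [fderiv_inner_apply ℝ (hνd p) (differentiableAt_const a)]
      simp [pder]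
    have e2 : fderiv ℝ (fun q => (inner ℝ (x q) (ν q) : ℝ)) p (EuclideanSpace.single i 1)
        = (inner ℝ (x p) (pder ν p i) : ℝ) := by
      rw [fderiv_inner_apply ℝ (hxd p) (hνd p)]
      have hz : (inner ℝ (fderiv ℝ x p (EuclideanSpace.single i 1)) (ν p) : ℝ) = 0 := by
        rw [real_inner_comm]; exact horth p i
      rw [hz, add_zero]
      rfl
    show fderiv ℝ _ p _ = _
    rw [fderiv_fun_sub (h1.fun_smul (hxd p)) (h2.fun_smul (differentiableAt_const a)),
      fderiv_fun_smul h1 (hxd p), fderiv_fun_smul h2 (differentiableAt_const a)]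
    simp only [ContinuousLinearMap.coe_sub', Pi.sub_apply, ContinuousLinearMap.add_apply,
      ContinuousLinearMap.coe_smul', Pi.smul_apply, ContinuousLinearMap.smulRight_apply,
      fderiv_fun_const, Pi.zero_apply, ContinuousLinearMap.zero_apply, smul_zero, zero_add]
    rw [e1, e2]
    have hcx : (inner ℝ (x p) (pder ν p i) : ℝ) = (inner ℝ (pder ν p i) (x p) : ℝ) :=
      real_inner_comm _ _
    rw [hcx]
    show (inner ℝ (ν p) a : ℝ) • pder x p i + _ - _ = _
    module
  -- tangential expansion of the pairings with ∂ν
  have hA : ∀ i, (inner ℝ (pder ν p i) a : ℝ)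
      = ∑ k, (∑ l, (indMetric x p)⁻¹ k l * (inner ℝ (pder x p l) a : ℝ))
          * (inner ℝ (pder ν p i) (pder x p k) : ℝ) := by
    intro i
    conv_lhs => rw [complete_expand (fun l => pder x p l) (ν p) (indMetric x p)
      (fun i j => rfl) (himm p) (hunit p) (fun k => horth p k) a]
    rw [inner_add_right, inner_sum, real_inner_smul_right, hνν' i, mul_zero, add_zero]
    exact Finset.sum_congr rfl fun k _ => real_inner_smul_right _ _ _
  have hB : ∀ i, (inner ℝ (pder ν p i) (x p) : ℝ)
      = ∑ k, (∑ l, (indMetric x p)⁻¹ k l * (inner ℝ (pder x p l) (x p) : ℝ))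
          * (inner ℝ (pder ν p i) (pder x p k) : ℝ) := by
    intro i
    conv_lhs => rw [complete_expand (fun l => pder x p l) (ν p) (indMetric x p)
      (fun i j => rfl) (himm p) (hunit p) (fun k => horth p k) (x p)]
    rw [inner_add_right, inner_sum, real_inner_smul_right, hνν' i, mul_zero, add_zero]
    exact Finset.sum_congr rfl fun k _ => real_inner_smul_right _ _ _
  -- the integrand
  have key : ∀ i j, (inner ℝ (pder (fun q => (inner ℝ (ν q) a : ℝ) • x q
        - (inner ℝ (x q) (ν q) : ℝ) • a) p i) (pder x p j) : ℝ)
      = (inner ℝ (pder ν p i) a : ℝ) * (inner ℝ (pder x p j) (x p) : ℝ)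
        + (inner ℝ (ν p) a : ℝ) * indMetric x p i j
        - (inner ℝ (pder ν p i) (x p) : ℝ) * (inner ℝ (pder x p j) a : ℝ) := by
    intro i j
    rw [hdW i, inner_sub_left, inner_add_left, real_inner_smul_left, real_inner_smul_left,
      real_inner_smul_left, real_inner_comm (x p) (pder x p j),
      real_inner_comm a (pder x p j)]
    rfl
  -- the trace identity
  have htr : ∑ i, ∑ j, (indMetric x p)⁻¹ i j * indMetric x p i j = (n : ℝ) := by
    have hgs : ∀ i j : Fin n, indMetric x p i j = indMetric x p j i := by
      intro i j; rw [hgdef, hgdef]; exact real_inner_comm _ _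
    have step1 : ∑ i, ∑ j, (indMetric x p)⁻¹ i j * indMetric x p i j
        = ∑ i, ∑ j, (indMetric x p)⁻¹ i j * indMetric x p j i :=
      Finset.sum_congr rfl fun i _ => Finset.sum_congr rfl fun j _ => by rw [hgs i j]
    have step2 : ∑ i, ∑ j, (indMetric x p)⁻¹ i j * indMetric x p j i
        = ((indMetric x p)⁻¹ * indMetric x p).trace := by
      rw [Matrix.trace]
      exact Finset.sum_congr rfl fun i _ => (Matrix.mul_apply).symm
    rw [step1, step2, Matrix.nonsing_inv_mul _ hdetu, Matrix.trace_one]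
    simp
  -- assemble
  show ∑ i, ∑ j, (indMetric x p)⁻¹ i j * _ = _
  simp only [key, hA, hB]
  exact alg_main' (indMetric x p)⁻¹ (indMetric x p)
    (Matrix.of fun i k => (inner ℝ (pder ν p i) (pder x p k) : ℝ))
    (fun j => (inner ℝ (pder x p j) (x p) : ℝ)) (fun j => (inner ℝ (pder x p j) a : ℝ))
    (inner ℝ (ν p) a : ℝ) hsymm htr
end

section
/- Let x: M → ℝ^{n+1} be an immersion with unit normal ν, second fundamental form h and mean curvature H, and a ∈ ℝ^{n+1} a constant vector. If X_a^T denotes the tangential projection of X_a = ⟨x,a⟩x − ½(|x|²+1)a onto M, then the symmetrized covariant derivative satisfies ½(∇_α (X_a^T)_β + ∇_β (X_a^T)_α) = ⟨x,a⟩ g_{αβ} − h_{αβ}⟨X_a, ν⟩. -/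
open Matrix

noncomputable section AuxST7

variable {n m : ℕ} {F : Type*} [NormedAddCommGroup F] [NormedSpace ℝ F]

lemma pder_sub' {f g : EuclideanSpace ℝ (Fin n) → F} {p : EuclideanSpace ℝ (Fin n)}
    (hf : DifferentiableAt ℝ f p) (hg : DifferentiableAt ℝ g p) (i : Fin n) :
    pder (fun q => f q - g q) p i = pder f p i - pder g p i := by
  simp [pder, fderiv_fun_sub hf hg]

lemma pder_smul' {c : EuclideanSpace ℝ (Fin n) → ℝ} {f : EuclideanSpace ℝ (Fin n) → F}
    {p : EuclideanSpace ℝ (Fin n)} (hc : DifferentiableAt ℝ c p)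
    (hf : DifferentiableAt ℝ f p) (i : Fin n) :
    pder (fun q => c q • f q) p i = c p • pder f p i + pder c p i • f p := by
  simp [pder, fderiv_fun_smul hc hf]

lemma pder_inner' {f g : EuclideanSpace ℝ (Fin n) → EuclideanSpace ℝ (Fin m)}
    {p : EuclideanSpace ℝ (Fin n)} (hf : DifferentiableAt ℝ f p)
    (hg : DifferentiableAt ℝ g p) (i : Fin n) :
    pder (fun q => (inner ℝ (f q) (g q) : ℝ)) p i
      = inner ℝ (f p) (pder g p i) + inner ℝ (pder f p i) (g p) := by
  simp only [pder]
  exact fderiv_inner_apply ℝ hf hg _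

lemma pder_pder_symm' (f : EuclideanSpace ℝ (Fin n) → F) (hf : ContDiff ℝ (⊤ : ℕ∞) f)
    (p : EuclideanSpace ℝ (Fin n)) (i j : Fin n) :
    pder (fun q => pder f q j) p i = pder (fun q => pder f q i) p j := by
  have hd : ∀ y, HasFDerivAt f (fderiv ℝ f y) y :=
    fun y => ((hf.differentiable (by simp)) y).hasFDerivAt
  have h2 : DifferentiableAt ℝ (fderiv ℝ f) p := by
    have := (hf.fderiv_right (m := (⊤ : ℕ∞)) (by simp)).differentiable (by simp)
    exact this p
  have hsymm := second_derivative_symmetric hd h2.hasFDerivAt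
    (EuclideanSpace.single i 1) (EuclideanSpace.single j 1)
  have key : ∀ v w : EuclideanSpace ℝ (Fin n),
      fderiv ℝ (fun q => fderiv ℝ f q v) p w = fderiv ℝ (fderiv ℝ f) p w v := by
    intro v w
    rw [fderiv_clm_apply h2 (differentiableAt_const v)]
    simp
  simp only [pder]
  rw [key, key, hsymm]

lemma pder_cmul_addconst {g : EuclideanSpace ℝ (Fin n) → ℝ} {p : EuclideanSpace ℝ (Fin n)}
    (hg : DifferentiableAt ℝ g p) (c d : ℝ) (i : Fin n) :
    pder (fun q => c * g q + d) p i = c * pder g p i := by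
  simp [pder, fderiv_add_const, fderiv_const_mul hg]

end AuxST7

/-- the tangential projection `X_a^T` of the conformal Killing field `X_a`
satisfies `½(∇_α (X_a^T)_β + ∇_β (X_a^T)_α) = ⟨x,a⟩ g_{αβ} − h_{αβ} ⟨X_a, ν⟩`,
where `∇_α (X_a^T)_β = ⟨∂_α X_a^T, ∂_β x⟩` is the covariant derivative of `X_a^T`
in local coordinates. -/
theorem symmetrized_covderiv_tangential_confKillX {n : ℕ}
    (x ν : EuclideanSpace ℝ (Fin n) → EuclideanSpace ℝ (Fin (n+1)))
    (a : EuclideanSpace ℝ (Fin (n+1))) (p : EuclideanSpace ℝ (Fin n)) (i j : Fin n)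
    (hx : ContDiff ℝ (⊤ : ℕ∞) x) (hν : ContDiff ℝ (⊤ : ℕ∞) ν)
    (hunit : ∀ q, ‖ν q‖ = 1)
    (horth : ∀ q i, (inner ℝ (ν q) (pder x q i) : ℝ) = 0)
    (himm : ∀ q, (indMetric x q).det ≠ 0) :
    (1 / 2 : ℝ) *
        ((inner ℝ (pder (fun q => confKillX a (x q) - (inner ℝ (confKillX a (x q)) (ν q) : ℝ) • ν q) p i)
            (pder x p j) : ℝ)
          + (inner ℝ (pder (fun q => confKillX a (x q) - (inner ℝ (confKillX a (x q)) (ν q) : ℝ) • ν q) p j)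
            (pder x p i) : ℝ))
      = (inner ℝ (x p) a : ℝ) * indMetric x p i j
        - secondFF x ν p i j * (inner ℝ (confKillX a (x p)) (ν p) : ℝ) := by
  have hxd : ∀ q, DifferentiableAt ℝ x q := fun q => (hx.differentiable (by simp)) q
  have hνd : ∀ q, DifferentiableAt ℝ ν q := fun q => (hν.differentiable (by simp)) q
  -- smoothness of X := confKillX a ∘ x
  have hXrw : (fun q => confKillX a (x q))
      = fun q => (inner ℝ (x q) a : ℝ) • x q
          - ((1/2 : ℝ) * (inner ℝ (x q) (x q) : ℝ) + 1/2) • a := by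
    funext q
    simp only [confKillX, real_inner_self_eq_norm_sq]
    ring_nf
  have hXsm : ContDiff ℝ (⊤ : ℕ∞) (fun q => confKillX a (x q)) := by
    rw [hXrw]
    exact ((hx.inner ℝ contDiff_const).smul hx).sub
      (((contDiff_const.mul (hx.inner ℝ hx)).add contDiff_const).smul contDiff_const)
  have hXd : ∀ q, DifferentiableAt ℝ (fun q => confKillX a (x q)) q :=
    fun q => (hXsm.differentiable (by simp)) q
  have hfsm : ContDiff ℝ (⊤ : ℕ∞) (fun q => (inner ℝ (confKillX a (x q)) (ν q) : ℝ)) :=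
    hXsm.inner ℝ hν
  have hfd : ∀ q, DifferentiableAt ℝ (fun q => (inner ℝ (confKillX a (x q)) (ν q) : ℝ)) q :=
    fun q => (hfsm.differentiable (by simp)) q
  -- derivative of X
  have hdX : ∀ k, pder (fun q => confKillX a (x q)) p k
      = (inner ℝ (x p) a : ℝ) • pder x p k + (inner ℝ (pder x p k) a : ℝ) • x p
        - (inner ℝ (x p) (pder x p k) : ℝ) • a := by
    intro k
    rw [hXrw]
    have h1 : DifferentiableAt ℝ (fun q => (inner ℝ (x q) a : ℝ) • x q) p :=
      (((hxd p).inner ℝ (differentiableAt_const a)).smul (hxd p))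
    have h2 : DifferentiableAt ℝ
        (fun q => ((1/2 : ℝ) * (inner ℝ (x q) (x q) : ℝ) + 1/2) • a) p :=
      (((differentiableAt_const _).mul ((hxd p).inner ℝ (hxd p))).add
        (differentiableAt_const _)).smul (differentiableAt_const a)
    rw [pder_sub' h1 h2 k,
      pder_smul' ((hxd p).inner ℝ (differentiableAt_const a)) (hxd p) k,
      pder_smul' (c := fun q => (1/2 : ℝ) * (inner ℝ (x q) (x q) : ℝ) + 1/2)
        (((differentiableAt_const _).mul ((hxd p).inner ℝ (hxd p))).add
        (differentiableAt_const _)) (differentiableAt_const a) k]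
    rw [pder_inner' (hxd p) (differentiableAt_const a) k,
      pder_cmul_addconst ((hxd p).inner ℝ (hxd p)) _ _ k,
      pder_inner' (hxd p) (hxd p) k]
    have hca : pder (fun _ : EuclideanSpace ℝ (Fin n) => a) p k = 0 := by simp [pder]
    have hIc : (inner ℝ (pder x p k) (x p) : ℝ) = (inner ℝ (x p) (pder x p k) : ℝ) :=
      real_inner_comm _ _
    rw [hca, hIc]
    simp [pder]
    module
  -- symmetry of the second fundamental form
  have hdxsm : ∀ k, ContDiff ℝ (⊤ : ℕ∞) (fun q => pder x q k) := by
    intro k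
    exact (hx.fderiv_right (m := (⊤ : ℕ∞)) (by simp)).clm_apply contDiff_const
  have hkey : ∀ k l, (inner ℝ (pder ν p k) (pder x p l) : ℝ)
      = - (inner ℝ (ν p) (pder (fun q => pder x q l) p k) : ℝ) := by
    intro k l
    have h0 : (fun q => (inner ℝ (ν q) (pder x q l) : ℝ)) = fun _ => (0:ℝ) :=
      funext fun q => horth q l
    have hp := pder_inner' (hνd p) (((hdxsm l).differentiable (by simp)) p) k
    rw [h0] at hp
    simp only [pder, fderiv_fun_const, Pi.zero_apply,
      ContinuousLinearMap.zero_apply] at hp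
    simp only [pder] at hp ⊢
    linarith
  have hsymm : (inner ℝ (pder ν p j) (pder x p i) : ℝ)
      = (inner ℝ (pder ν p i) (pder x p j) : ℝ) := by
    rw [hkey j i, hkey i j, pder_pder_symm' x hx p j i]
  -- the covariant derivative of the tangential projection
  have hT : ∀ k l, (inner ℝ (pder (fun q => confKillX a (x q)
        - (inner ℝ (confKillX a (x q)) (ν q) : ℝ) • ν q) p k) (pder x p l) : ℝ)
      = (inner ℝ (x p) a : ℝ) * (inner ℝ (pder x p k) (pder x p l) : ℝ)
        + (inner ℝ (pder x p k) a : ℝ) * (inner ℝ (x p) (pder x p l) : ℝ)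
        - (inner ℝ (x p) (pder x p k) : ℝ) * (inner ℝ a (pder x p l) : ℝ)
        - (inner ℝ (confKillX a (x p)) (ν p) : ℝ) * (inner ℝ (pder ν p k) (pder x p l) : ℝ) := by
    intro k l
    rw [pder_sub' (g := fun q => (inner ℝ (confKillX a (x q)) (ν q) : ℝ) • ν q)
        (hXd p) ((hfd p).smul (hνd p)) k,
      pder_smul' (hfd p) (hνd p) k, hdX k]
    rw [inner_sub_left, inner_add_left, inner_sub_left, inner_add_left]
    simp only [real_inner_smul_left]
    rw [horth p l]
    ring
  rw [hT i j, hT j i]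
  simp only [indMetric, secondFF, Matrix.of_apply]
  rw [real_inner_comm (pder x p j) (pder x p i),
    real_inner_comm a (pder x p i), real_inner_comm a (pder x p j), hsymm]
  ring
end
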